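/- arXiv:2007.03562 — 4 statements merged into one kernel-verified Lean document; each statement's English description precedes it below -/
import Mathlib

section
/- Let (α_k)_{k≥0} be a sequence in (0,1), λ_0 = 1, and λ_{k+1} = (1−α_k) λ_k for all k ≥ 0. Suppose there exist β > 0 and an integer p > 0 such that α_k^p / λ_{k+1} ≥ β for all k ≥ 0. Then for all K ≥ 1, λ_K ≤ (p / (p + K β^{1/p}))^p. -/
/-!
Put `s k = lam k ^ (1/p)` and `c = β ^ (1/p)`. Taking `p`-th roots, the ratio condition gives
`c * s (k+1) ≤ α k`, and Bernoulli's inequality for the exponent `1/p` gives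
`s (k+1) = (1 - α k) ^ (1/p) * s k ≤ (1 - α k / p) * s k`. Together they make `1 / s k` grow by
at least `c / p` per step, so `1 / s K ≥ 1 + K c / p`, and raising to the `p`-th power gives
the bound.
-/

open Real

theorem one_sub_rpow_inv_natCast_le {a : ℝ} (ha : a ≤ 1) {p : ℕ} (hp : p ≠ 0) :
    (1 - a) ^ (p⁻¹ : ℝ) ≤ 1 - a / p := by
  have hp1 : (1 : ℝ) ≤ p := by exact_mod_cast Nat.one_le_iff_ne_zero.mpr hp
  have h := rpow_one_add_le_one_add_mul_self (s := -a) (by linarith) (p := (p : ℝ)⁻¹)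
    (by positivity) (inv_le_one_of_one_le₀ hp1)
  rwa [← sub_eq_add_neg, mul_neg, inv_mul_eq_div, ← sub_eq_add_neg] at h

theorem add_mul_le_of_add_le_succ {t : ℕ → ℝ} {d : ℝ} (h : ∀ k, t k + d ≤ t (k + 1))
    (n : ℕ) :
    t 0 + n * d ≤ t n := by
  induction n with
  | zero => simp
  | succ n ih => push_cast; linarith [h n]

theorem inv_add_div_le_inv_of_le_one_sub_mul {s s' a c p : ℝ} (hs : 0 < s) (hs' : 0 < s')
    (hp : 0 < p) (hstep : s' ≤ (1 - a / p) * s) (hc : c * s' ≤ a) :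
    s⁻¹ + c / p ≤ s'⁻¹ := by
  rw [inv_eq_one_div, inv_eq_one_div, div_add_div _ _ hs.ne' hp.ne',
    div_le_div_iff₀ (by positivity) hs']
  have hstep' : p * s' ≤ p * s - a * s :=
    calc p * s' ≤ p * ((1 - a / p) * s) := by gcongr
      _ = p * s - a * s := by field_simp
  nlinarith [mul_le_mul_of_nonneg_left hc hs.le]

theorem rpow_inv_natCast_mul_le_of_le_pow_div {a x β : ℝ} (ha : 0 ≤ a) (hx : 0 < x)
    (hβ : 0 ≤ β) {p : ℕ} (hp : p ≠ 0) (hratio : β ≤ a ^ p / x) :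
    β ^ (p⁻¹ : ℝ) * x ^ (p⁻¹ : ℝ) ≤ a := by
  rw [← mul_rpow hβ hx.le, ← pow_rpow_inv_natCast ha hp]
  gcongr
  rwa [← le_div_iff₀ hx]

namespace EstimateSequence

theorem pos {α lam : ℕ → ℝ} (hα : ∀ k, α k < 1) (h0 : 0 < lam 0)
    (hrec : ∀ k, lam (k + 1) = (1 - α k) * lam k) (k : ℕ) : 0 < lam k := by
  induction k with
  | zero => exact h0
  | succ k ih => rw [hrec]; exact mul_pos (sub_pos.mpr (hα k)) ih

theorem root_succ_le {α lam : ℕ → ℝ} (hα : ∀ k, α k < 1) (hlam : ∀ k, 0 ≤ lam k)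
    (hrec : ∀ k, lam (k + 1) = (1 - α k) * lam k) {p : ℕ} (hp : p ≠ 0) (k : ℕ) :
    lam (k + 1) ^ (p⁻¹ : ℝ) ≤ (1 - α k / p) * lam k ^ (p⁻¹ : ℝ) := by
  rw [hrec, mul_rpow (sub_nonneg.mpr (hα k).le) (hlam k)]
  exact mul_le_mul_of_nonneg_right (one_sub_rpow_inv_natCast_le (hα k).le hp)
    (rpow_nonneg (hlam k) _)

end EstimateSequence

open EstimateSequence in
theorem estimate_sequence_decay (α lam : ℕ → ℝ)
    (hα : ∀ k, α k ∈ Set.Ioo (0 : ℝ) 1)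
    (hlam0 : lam 0 = 1)
    (hrec : ∀ k, lam (k + 1) = (1 - α k) * lam k)
    (β : ℝ) (hβ : 0 < β) (p : ℕ) (hp : 0 < p)
    (hratio : ∀ k, β ≤ α k ^ p / lam (k + 1)) :
    ∀ K : ℕ, 1 ≤ K →
      lam K ≤ ((p : ℝ) / ((p : ℝ) + (K : ℝ) * β ^ ((1 : ℝ) / (p : ℝ)))) ^ p := by
  intro K _
  have hp0 : p ≠ 0 := hp.ne'
  have hlam : ∀ k, 0 < lam k := pos (fun k => (hα k).2) (by rw [hlam0]; exact one_pos) hrec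
  set c := β ^ ((p : ℝ)⁻¹)
  set s : ℕ → ℝ := fun k => lam k ^ ((p : ℝ)⁻¹)
  have hs : ∀ k, 0 < s k := fun k => rpow_pos_of_pos (hlam k) _
  have hgrowth : ∀ k, (s k)⁻¹ + c / p ≤ (s (k + 1))⁻¹ := fun k =>
    inv_add_div_le_inv_of_le_one_sub_mul (hs k) (hs (k + 1)) (by positivity)
      (root_succ_le (fun k => (hα k).2) (fun k => (hlam k).le) hrec hp0 k)
      (rpow_inv_natCast_mul_le_of_le_pow_div (hα k).1.le (hlam (k + 1)) hβ.le hp0 (hratio k))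
  have hlower : 1 + K * (c / p) ≤ (s K)⁻¹ := by
    simpa [s, hlam0] using add_mul_le_of_add_le_succ hgrowth K
  have hsK : s K ≤ p / (p + K * c) := by
    rw [← inv_div, le_inv_comm₀ (hs K) (by positivity)]
    calc ((p : ℝ) + K * c) / p = 1 + K * (c / p) := by field_simp
      _ ≤ (s K)⁻¹ := hlower
  calc lam K = s K ^ p := (rpow_inv_natCast_pow (hlam K).le hp0).symm
    _ ≤ _ := by rw [one_div]; gcongr; exact (hs K).le
end

section
/- Let λ_0 = 1, and for each k let α_k ∈ (0,1) solve 12 α_k³ = (1−α_k) λ_k with λ_{k+1} = (1−α_k) λ_k. Then for all K ≥ 1, λ_K ≤ (3 / (3 + K (1/12)^{1/3}))³, so λ_K = O(K^{−3}). -/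
theorem cubic_lambda_decay (α lam : ℕ → ℝ)
    (hlam0 : lam 0 = 1)
    (hα : ∀ k, α k ∈ Set.Ioo (0 : ℝ) 1)
    (heq : ∀ k, 12 * α k ^ 3 = (1 - α k) * lam k)
    (hrec : ∀ k, lam (k + 1) = (1 - α k) * lam k) :
    ∀ K : ℕ, 1 ≤ K →
      lam K ≤ (3 / (3 + (K : ℝ) * ((1 : ℝ) / 12) ^ ((1 : ℝ) / 3))) ^ 3 := by
  set c : ℝ := ((1 : ℝ) / 12) ^ ((1 : ℝ) / 3) with hc_def
  have hc : 0 < c := Real.rpow_pos_of_pos (by norm_num) _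
  have hc3 : c ^ 3 = (1 : ℝ) / 12 := by
    rw [hc_def, ← Real.rpow_natCast (((1:ℝ)/12) ^ ((1:ℝ)/3)) 3,
      ← Real.rpow_mul (by norm_num)]
    norm_num
  have hpos : ∀ k, 0 < lam k := by
    intro k
    induction k with
    | zero => rw [hlam0]; norm_num
    | succ n ih =>
      rw [hrec n]
      exact mul_pos (by linarith [(hα n).2]) ih
  set t : ℕ → ℝ := fun k => lam k ^ ((1 : ℝ) / 3) with ht_def
  have htpos : ∀ k, 0 < t k := fun k => Real.rpow_pos_of_pos (hpos k) _
  have ht3 : ∀ k, t k ^ 3 = lam k := by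
    intro k
    rw [ht_def]
    simp only
    rw [← Real.rpow_natCast (lam k ^ ((1:ℝ)/3)) 3, ← Real.rpow_mul (hpos k).le]
    norm_num
  have hαeq : ∀ k, α k = t (k + 1) * c := by
    intro k
    have h1 : α k ^ 3 = (t (k + 1) * c) ^ 3 := by
      rw [mul_pow, ht3, hc3, hrec k]
      linarith [heq k]
    have hαpos := (hα k).1
    have hbpos : 0 < t (k + 1) * c := mul_pos (htpos _) hc
    exact le_antisymm
      (le_of_pow_le_pow_left₀ (by norm_num) hbpos.le h1.le)
      (le_of_pow_le_pow_left₀ (by norm_num) hαpos.le h1.ge)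
  have hstep : ∀ k, 1 / t k + c / 3 ≤ 1 / t (k + 1) := by
    intro k
    have hs := htpos (k + 1)
    have htk := htpos k
    have hcube : t k ^ 3 - t (k + 1) ^ 3 = (t (k+1) * c) * t k ^ 3 := by
      rw [ht3, ht3, hrec k, hαeq k]; ring
    have hle : t (k + 1) ≤ t k := by
      have h3 : t (k+1) ^ 3 ≤ t k ^ 3 := by nlinarith [mul_pos (mul_pos hs hc) (pow_pos htk 3)]
      exact le_of_pow_le_pow_left₀ (by norm_num) htk.le h3
    have key : c * t (k+1) * t k ≤ 3 * (t k - t (k+1)) := by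
      nlinarith [mul_pos hs htk, sq_nonneg (t k - t (k+1)), pow_pos htk 2]
    rw [div_add_div _ _ (ne_of_gt htk) (by norm_num : (3:ℝ) ≠ 0),
      div_le_div_iff₀ (by positivity) hs]
    nlinarith [mul_pos hs htk]
  have hmain : ∀ K : ℕ, (3 + (K : ℝ) * c) / 3 ≤ 1 / t K := by
    intro K
    induction K with
    | zero =>
      have : t 0 = 1 := by rw [ht_def]; simp [hlam0]
      rw [this]; norm_num
    | succ n ih =>
      have := hstep n
      push_cast
      linarith
  intro K _
  have hK : (0 : ℝ) < 3 + (K : ℝ) * c := by positivity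
  have h1 : (3 + (K : ℝ) * c) / 3 ≤ 1 / t K := hmain K
  have h2 : t K ≤ 3 / (3 + (K : ℝ) * c) := by
    rw [le_div_iff₀ hK]
    have h3 : t K * ((3 + (K : ℝ) * c) / 3) ≤ 1 := by
      calc t K * ((3 + (K : ℝ) * c) / 3) ≤ t K * (1 / t K) :=
            mul_le_mul_of_nonneg_left h1 (htpos K).le
        _ = 1 := mul_one_div_cancel (ne_of_gt (htpos K))
    nlinarith [h3]
  calc lam K = t K ^ 3 := (ht3 K).symm
    _ ≤ (3 / (3 + (K : ℝ) * c)) ^ 3 := pow_le_pow_left₀ (htpos K).le h2 3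
end

section
/- Let p ≥ 2 be an integer and define c_p = (p−1) / ((2p−3)^{1/(p−2)} + 1)^{p−2} (with c_2 = 1 interpreted by the limit). Then for p = 3, the function φ(x) = ‖x − x_0‖³ on R^n satisfies φ(y) − φ(x) − ⟨φ'(x), y − x⟩ ≥ c_3 ‖x − y‖³ for all x, y, where c_3 = 2/(3+1) = 1/2. -/
open RealInnerProductSpace

theorem keylem (A B D : ℝ) (hA : 0 ≤ A) (hB : 0 ≤ B) (hD : 0 ≤ D)
    (h3 : D ≤ A + B) :
    2*B^3 + A^3 - 3*A*B^2 + 3*A*D^2 - D^3 ≥ 0 := by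
  rcases le_or_gt D (3*A) with h | h
  · nlinarith [mul_nonneg (sq_nonneg (B-A)) (by linarith : (0:ℝ) ≤ 2*B+A),
      mul_nonneg (sq_nonneg D) (by linarith : (0:ℝ) ≤ 3*A - D)]
  · have hB' : D - A ≤ B := by linarith
    nlinarith [mul_nonneg (sq_nonneg (B-A)) (by linarith : (0:ℝ) ≤ 2*B+A),
      mul_nonneg (sq_nonneg (D-2*A)) (by linarith : (0:ℝ) ≤ 2*B+A),
      mul_nonneg (mul_nonneg (by linarith : (0:ℝ) ≤ B+A-D) (by linarith : (0:ℝ) ≤ B+A-D)) (by linarith : (0:ℝ) ≤ 2*B+A),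
      mul_nonneg (sq_nonneg (D-2*A)) hD,
      mul_nonneg (mul_nonneg (by linarith : (0:ℝ) ≤ B+A-D) (by linarith : (0:ℝ) ≤ D-3*A)) hB,
      sq_nonneg (D-3*A), mul_nonneg hA hD]

theorem cube_norm_uniform_convexity {n : ℕ} (x₀ : EuclideanSpace ℝ (Fin n))
    (x y : EuclideanSpace ℝ (Fin n)) :
    ‖y - x₀‖ ^ 3 - ‖x - x₀‖ ^ 3 - ⟪(3 * ‖x - x₀‖) • (x - x₀), y - x⟫ ≥
      ((3 - 1) / ((2 * 3 - 3) ^ ((1 : ℝ) / (3 - 2)) + 1) ^ ((3 : ℕ) - 2)) * ‖x - y‖ ^ 3 := by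
  have hc : ((3 - 1) / ((2 * 3 - 3) ^ ((1 : ℝ) / (3 - 2)) + 1) ^ ((3 : ℕ) - 2) : ℝ) = 1/2 := by
    norm_num
  rw [hc]
  have hyx : y - x = (y - x₀) - (x - x₀) := by abel
  have hxy : x - y = (x - x₀) - (y - x₀) := by abel
  rw [real_inner_smul_left, hyx, inner_sub_right, real_inner_self_eq_norm_sq, hxy]
  set a := x - x₀ with ha
  set b := y - x₀ with hb
  have htri : ‖a - b‖ ≤ ‖a‖ + ‖b‖ := norm_sub_le a b
  have key := keylem ‖a‖ ‖b‖ ‖a - b‖ (norm_nonneg a) (norm_nonneg b) (norm_nonneg _) htri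
  have h1 : ‖a - b‖^2 = ‖a‖^2 - 2*⟪a,b⟫ + ‖b‖^2 := norm_sub_sq_real a b
  have ht : ⟪a,b⟫ = (‖a‖^2 + ‖b‖^2 - ‖a - b‖^2)/2 := by linarith
  rw [ht]
  nlinarith [key]
end

section
/- Let f, g : Q → R with g μ̂-strongly convex perturbation: define f̂ = f + (μ̂/2)‖·‖², and let φ(y) and φ̂(y) be the Lagrangian dual functions of min{f(x) : Ax = 0} and min{f̂(x) : Ax = 0}, with optimal values φ* and φ̂*. If ‖x*‖ ≤ R for the relevant primal solutions and μ̂ ≤ δ/(2R²), then any ŷ with φ̂* − φ̂(ŷ) ≤ δ/2 satisfies φ* − φ(ŷ) ≤ δ (i.e., solving the regularized dual to accuracy δ/2 solves the original dual to accuracy δ). -/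
open RealInnerProductSpace

theorem dual_smoothing_accuracy_transfer {n m : ℕ}
    (Q : Set (EuclideanSpace ℝ (Fin n))) (hQne : Q.Nonempty) (hQc : IsCompact Q)
    (f : EuclideanSpace ℝ (Fin n) → ℝ) (hf : ContinuousOn f Q)
    (A : EuclideanSpace ℝ (Fin n) →L[ℝ] EuclideanSpace ℝ (Fin m))
    (R δ μ : ℝ) (hR : 0 < R) (hδ : 0 < δ) (hμ0 : 0 ≤ μ)
    (hbound : ∀ x ∈ Q, ‖x‖ ≤ R)
    (hμ : μ ≤ δ / (2 * R ^ 2))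
    (φ φhat : EuclideanSpace ℝ (Fin m) → ℝ)
    (hφ : ∀ y, φ y = ⨅ x : Q, (f x - ⟪y, A x⟫))
    (hφhat : ∀ y, φhat y = ⨅ x : Q, (f x + (μ / 2) * ‖(x : EuclideanSpace ℝ (Fin n))‖ ^ 2 - ⟪y, A x⟫))
    (φstar φhatstar : ℝ)
    (hstar : IsGreatest (Set.range φ) φstar)
    (hhatstar : IsGreatest (Set.range φhat) φhatstar)
    (yhat : EuclideanSpace ℝ (Fin m))
    (hyhat : φhatstar - φhat yhat ≤ δ / 2) :
    φstar - φ yhat ≤ δ := by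
  have hQne' : Nonempty Q := hQne.to_subtype
  -- boundedness below of the objective functions on Q
  have hbdd : ∀ y : EuclideanSpace ℝ (Fin m),
      BddBelow (Set.range fun x : Q => f x - ⟪y, A x⟫) := by
    intro y
    have hc : ContinuousOn (fun x => f x - ⟪y, A x⟫) Q :=
      hf.sub ((Continuous.inner continuous_const A.continuous).continuousOn)
    have := (hQc.image_of_continuousOn hc).bddBelow
    rwa [Set.image_eq_range] at this
  have hbddhat : ∀ y : EuclideanSpace ℝ (Fin m),
      BddBelow (Set.range fun x : Q =>
        f x + (μ / 2) * ‖(x : EuclideanSpace ℝ (Fin n))‖ ^ 2 - ⟪y, A x⟫) := by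
    intro y
    have hc : ContinuousOn (fun x => f x + (μ / 2) * ‖x‖ ^ 2 - ⟪y, A x⟫) Q :=
      (hf.add ((continuous_const.mul ((continuous_norm).pow 2)).continuousOn)).sub
        ((Continuous.inner continuous_const A.continuous).continuousOn)
    have := (hQc.image_of_continuousOn hc).bddBelow
    rwa [Set.image_eq_range] at this
  -- φ ≤ φhat pointwise
  have h1 : ∀ y, φ y ≤ φhat y := by
    intro y
    rw [hφ, hφhat]
    refine ciInf_mono (hbdd y) fun x => ?_
    have : 0 ≤ (μ / 2) * ‖(x : EuclideanSpace ℝ (Fin n))‖ ^ 2 := by positivity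
    linarith
  -- φhat yhat ≤ φ yhat + (μ/2) R²
  have h2 : φhat yhat ≤ φ yhat + (μ / 2) * R ^ 2 := by
    rw [hφ, hφhat]
    rw [← sub_le_iff_le_add]
    refine le_ciInf fun x => ?_
    rw [sub_le_iff_le_add]
    have hxR : ‖(x : EuclideanSpace ℝ (Fin n))‖ ≤ R := hbound x x.2
    have hx0 : (0:ℝ) ≤ ‖(x : EuclideanSpace ℝ (Fin n))‖ := norm_nonneg _
    have hsq : ‖(x : EuclideanSpace ℝ (Fin n))‖ ^ 2 ≤ R ^ 2 := by nlinarith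
    have hμsq : (μ / 2) * ‖(x : EuclideanSpace ℝ (Fin n))‖ ^ 2 ≤ (μ / 2) * R ^ 2 := by
      nlinarith
    calc (⨅ x : Q, (f x + (μ / 2) * ‖(x : EuclideanSpace ℝ (Fin n))‖ ^ 2 - ⟪yhat, A x⟫))
        ≤ f x + (μ / 2) * ‖(x : EuclideanSpace ℝ (Fin n))‖ ^ 2 - ⟪yhat, A x⟫ :=
          ciInf_le (hbddhat yhat) x
      _ ≤ f x - ⟪yhat, A x⟫ + (μ / 2) * R ^ 2 := by linarith
  -- φstar ≤ φhatstar
  have h3 : φstar ≤ φhatstar := by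
    obtain ⟨y0, hy0⟩ := hstar.1
    calc φstar = φ y0 := hy0.symm
      _ ≤ φhat y0 := h1 y0
      _ ≤ φhatstar := hhatstar.2 ⟨y0, rfl⟩
  have hR2 : (0:ℝ) < R ^ 2 := by positivity
  have hμR : (μ / 2) * R ^ 2 ≤ δ / 4 := by
    rw [le_div_iff₀ (by positivity : (0:ℝ) < 2 * R ^ 2)] at hμ
    nlinarith
  linarith
end
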